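/- For every number of actions N ≥ 1, every discount factor α with 0 < α < 1/(800·ln(2.32·N)), every sequence of gains g_i^j ∈ [−1,1] chosen by Nature, every action i, and every round j ≥ 0, the NormalHedge regret satisfies R_i^j ≤ √(8·ln(2.32·N)/α). -/

import Mathlib

open Finset

/-- The NormalHedge potential function: `Φ(x) = exp(x²/8)` for `x > 0`, `1` for `x ≤ 0`. -/
noncomputable def Phi (x : ℝ) : ℝ := if 0 < x then Real.exp (x ^ 2 / 8) else 1

/-- NormalHedge weight for regret `R`:
`w = R·exp(α·R²/8)` if `R > 0`, and `0` if `R ≤ 0`. -/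
noncomputable def nhWeight (α R : ℝ) : ℝ :=
  if 0 < R then R * Real.exp (α * R ^ 2 / 8) else 0

/-- NormalHedge probability on action `i` given current regrets `R`:
normalized weights if the weight sum is positive, uniform otherwise. -/
noncomputable def nhProb {N : ℕ} (α : ℝ) (R : Fin N → ℝ) (i : Fin N) : ℝ :=
  if 0 < ∑ k, nhWeight α (R k) then nhWeight α (R i) / ∑ k, nhWeight α (R k)
  else 1 / N

/-- NormalHedge regrets: `R_i^0 = 0`, `R_i^{j+1} = (1-α)·R_i^j + g_i^j - g_A^j` where
`g_A^j = Σ_i p_i^j · g_i^j`. Here `g j i` is the gain of action `i` in round `j`. -/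
noncomputable def nhRegret {N : ℕ} (α : ℝ) (g : ℕ → Fin N → ℝ) : ℕ → Fin N → ℝ
  | 0 => fun _ => 0
  | j + 1 => fun i =>
      (1 - α) * nhRegret α g j i + g j i -
        ∑ k, nhProb α (nhRegret α g j) k * g j k

/-!
Write `F(t) = exp (α max(t, 0)² / 8) = Φ(√α t)`, so that `F' = α/4 · w` with `w` the NormalHedge
weight. The invariant is `∑ᵢ F(Rᵢ) ≤ 2.32 N`; it forces `α Rᵢ² / 8 ≤ log (2.32 N)`, which is the
bound, and also `α Rᵢ ≤ 1/10` once `α log (2.32 N) ≤ 1/800`. Since `F'` is Lipschitz on every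
half-line `(-∞, m]`, a second-order expansion of one round gives
`F(Rᵢ') ≤ F(Rᵢ) + α/4 · wᵢ (gᵢ - g_A) + α F(Rᵢ) (0.65 - 0.83 log F(Rᵢ))`.
The first-order terms cancel in the sum because `g_A` is the `w`-weighted mean of the gains, and
the remaining drift is concave in `F(Rᵢ)` and nonpositive at `F(Rᵢ) = 2.32 > exp (65/83)`, so the
tangent at `2.32` preserves the invariant.
-/

theorem Convex.image_le_add_deriv_mul_add_sq {D : Set ℝ} (hD : Convex ℝ D) {f f' : ℝ → ℝ}
    {K x y : ℝ} (hf : ∀ t ∈ D, HasDerivAt f (f' t) t)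
    (hf' : ∀ a ∈ D, ∀ b ∈ D, a ≤ b → f' b - f' a ≤ K * (b - a)) (hx : x ∈ D) (hy : y ∈ D) :
    f y ≤ f x + f' x * (y - x) + K / 2 * (y - x) ^ 2 := by
  set G : ℝ → ℝ := fun t => f t - f' x * (t - x) - K / 2 * (t - x) ^ 2
  have hG : ∀ t ∈ D, HasDerivAt G (f' t - f' x - K * (t - x)) t := fun t ht => by
    refine (((hf t ht).sub (((hasDerivAt_id t).sub_const x).const_mul (f' x))).sub
      ((((hasDerivAt_id t).sub_const x).pow 2).const_mul (K / 2))).congr_deriv ?_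
    simp only [id, Nat.cast_ofNat]
    ring
  have hGD : ∀ {a b}, a ∈ D → b ∈ D → Set.Icc a b ⊆ D := fun ha hb => hD.ordConnected.out ha hb
  have hcont : ∀ {a b}, a ∈ D → b ∈ D → ContinuousOn G (Set.Icc a b) := fun ha hb t ht =>
    (hG t (hGD ha hb ht)).continuousAt.continuousWithinAt
  have hdiff : ∀ {a b}, a ∈ D → b ∈ D → DifferentiableOn ℝ G (interior (Set.Icc a b)) :=
    fun ha hb t ht =>
      (hG t (hGD ha hb (interior_subset ht))).differentiableAt.differentiableWithinAt
  suffices G y ≤ G x by simp only [G, sub_self, mul_zero, sub_zero] at this; linarith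
  rcases le_total x y with hxy | hyx
  · have := (convex_Icc x y).image_sub_le_mul_sub_of_deriv_le (hcont hx hy) (hdiff hx hy)
      (C := 0) (fun t ht => by
        rw [interior_Icc] at ht
        rw [(hG t (hGD hx hy (Set.Ioo_subset_Icc_self ht))).deriv]
        linarith [hf' x hx t (hGD hx hy (Set.Ioo_subset_Icc_self ht)) ht.1.le])
      x (Set.left_mem_Icc.2 hxy) y (Set.right_mem_Icc.2 hxy) hxy
    linarith
  · have := (convex_Icc y x).mul_sub_le_image_sub_of_le_deriv (hcont hy hx) (hdiff hy hx)
      (C := 0) (fun t ht => by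
        rw [interior_Icc] at ht
        rw [(hG t (hGD hy hx (Set.Ioo_subset_Icc_self ht))).deriv]
        linarith [hf' t (hGD hy hx (Set.Ioo_subset_Icc_self ht)) x hx ht.2.le])
      y (Set.left_mem_Icc.2 hyx) x (Set.right_mem_Icc.2 hyx) hyx
    linarith

theorem le_log_two_point_three_two_mul {N : ℕ} (hN : 0 < N) :
    (65 : ℝ) / 83 ≤ Real.log (2.32 * N) := by
  have hlog2 := Real.log_two_gt_d9
  have hlog116 := Real.one_sub_inv_le_log_of_pos (show (0 : ℝ) < 1.16 by norm_num)
  have hmono : Real.log 2.32 ≤ Real.log (2.32 * N) :=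
    Real.log_le_log (by norm_num) (le_mul_of_one_le_right (by norm_num) (by exact_mod_cast hN))
  rw [show (2.32 : ℝ) = 2 * 1.16 by norm_num, Real.log_mul two_ne_zero (by norm_num)] at hmono
  norm_num at hlog2 hlog116 hmono ⊢
  linarith

namespace NormalHedge

noncomputable def potential (α t : ℝ) : ℝ := Real.exp (α * max t 0 ^ 2 / 8)

theorem potential_pos (α t : ℝ) : 0 < potential α t := Real.exp_pos _

theorem potential_of_nonpos (α : ℝ) {t : ℝ} (ht : t ≤ 0) : potential α t = 1 := by
  simp [potential, max_eq_right ht]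

theorem potential_of_nonneg (α : ℝ) {t : ℝ} (ht : 0 ≤ t) :
    potential α t = Real.exp (α * t ^ 2 / 8) := by
  rw [potential, max_eq_left ht]

theorem log_potential (α t : ℝ) : Real.log (potential α t) = α * max t 0 ^ 2 / 8 :=
  Real.log_exp _

theorem nhWeight_eq_max (α t : ℝ) :
    nhWeight α t = max t 0 * Real.exp (α * max t 0 ^ 2 / 8) := by
  rcases le_or_gt t 0 with ht | ht
  · simp [nhWeight, ht.not_gt, max_eq_right ht]
  · simp [nhWeight, ht, max_eq_left ht.le]

theorem nhWeight_nonneg (α t : ℝ) : 0 ≤ nhWeight α t := by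
  rw [nhWeight_eq_max]
  positivity

theorem hasDerivAt_exp_mul_sq_div (α t : ℝ) :
    HasDerivAt (fun s => Real.exp (α * s ^ 2 / 8)) (α / 4 * (t * Real.exp (α * t ^ 2 / 8))) t := by
  refine ((((hasDerivAt_pow 2 t).const_mul α).div_const 8).exp).congr_deriv ?_
  push_cast
  ring

theorem hasDerivAt_potential (α t : ℝ) : HasDerivAt (potential α) (α / 4 * nhWeight α t) t := by
  rcases lt_trichotomy t 0 with ht | rfl | ht
  · have hloc : potential α =ᶠ[nhds t] fun _ => 1 :=
      Filter.eventually_of_mem (Iio_mem_nhds ht) fun s hs => potential_of_nonpos α (le_of_lt hs)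
    simpa [nhWeight, ht.not_gt] using (hasDerivAt_const t (1 : ℝ)).congr_of_eventuallyEq hloc
  · rw [show α / 4 * nhWeight α 0 = 0 by simp [nhWeight]]
    have hleft : HasDerivWithinAt (potential α) 0 (Set.Iic 0) 0 :=
      (hasDerivWithinAt_const 0 _ (1 : ℝ)).congr (fun s hs => potential_of_nonpos α hs)
        (potential_of_nonpos α le_rfl)
    have hright : HasDerivWithinAt (potential α) 0 (Set.Ici 0) 0 := by
      refine ((hasDerivAt_exp_mul_sq_div α 0).hasDerivWithinAt.congr
        (fun s hs => potential_of_nonneg α hs) (potential_of_nonneg α le_rfl)).congr_deriv ?_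
      simp
    simpa [Set.Iic_union_Ici] using hleft.union hright
  · have hloc : potential α =ᶠ[nhds t] fun s => Real.exp (α * s ^ 2 / 8) :=
      Filter.eventually_of_mem (Ioi_mem_nhds ht) fun s hs => potential_of_nonneg α (le_of_lt hs)
    simpa [nhWeight, ht] using (hasDerivAt_exp_mul_sq_div α t).congr_of_eventuallyEq hloc

theorem hasDerivAt_mul_exp_mul_sq_div (α u : ℝ) :
    HasDerivAt (fun s => s * Real.exp (α * s ^ 2 / 8))
      ((1 + α * u ^ 2 / 4) * Real.exp (α * u ^ 2 / 8)) u := by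
  refine ((hasDerivAt_id u).mul (hasDerivAt_exp_mul_sq_div α u)).congr_deriv ?_
  simp only [id]
  ring

theorem nhWeight_sub_le {α m s t : ℝ} (hα : 0 ≤ α) (hm : 0 ≤ m) (hst : s ≤ t) (htm : t ≤ m) :
    nhWeight α t - nhWeight α s ≤ (1 + α * m ^ 2 / 4) * Real.exp (α * m ^ 2 / 8) * (t - s) := by
  set K := (1 + α * m ^ 2 / 4) * Real.exp (α * m ^ 2 / 8)
  have hsq : ∀ u ∈ Set.Icc 0 m, α * u ^ 2 ≤ α * m ^ 2 := fun u hu =>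
    mul_le_mul_of_nonneg_left (pow_le_pow_left₀ hu.1 hu.2 2) hα
  have hψ := (convex_Icc 0 m).image_sub_le_mul_sub_of_deriv_le
    (f := fun u => u * Real.exp (α * u ^ 2 / 8)) (C := K)
    (fun u _ => (hasDerivAt_mul_exp_mul_sq_div α u).continuousAt.continuousWithinAt)
    (fun u _ => (hasDerivAt_mul_exp_mul_sq_div α u).differentiableAt.differentiableWithinAt)
    (fun u hu => by
      have hu' := hsq u (interior_subset hu)
      rw [(hasDerivAt_mul_exp_mul_sq_div α u).deriv]
      exact mul_le_mul (by linarith) (Real.exp_le_exp.2 (by linarith)) (Real.exp_pos _).le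
        (by positivity))
    (max s 0) ⟨le_max_right _ _, max_le (hst.trans htm) hm⟩
    (max t 0) ⟨le_max_right _ _, max_le htm hm⟩ (max_le_max_right 0 hst)
  have hmax : max t 0 - max s 0 ≤ t - s :=
    (le_abs_self _).trans ((abs_max_sub_max_le_abs t s 0).trans (abs_of_nonneg (by linarith)).le)
  rw [nhWeight_eq_max, nhWeight_eq_max]
  exact hψ.trans (mul_le_mul_of_nonneg_left hmax (by positivity))

theorem potential_le_quadratic {α m x y : ℝ} (hα : 0 ≤ α) (hm : 0 ≤ m) (hx : x ≤ m) (hy : y ≤ m) :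
    potential α y ≤ potential α x + α / 4 * nhWeight α x * (y - x)
      + α / 8 * ((1 + α * m ^ 2 / 4) * Real.exp (α * m ^ 2 / 8)) * (y - x) ^ 2 := by
  have := (convex_Iic m).image_le_add_deriv_mul_add_sq
    (K := α / 4 * ((1 + α * m ^ 2 / 4) * Real.exp (α * m ^ 2 / 8)))
    (fun t _ => hasDerivAt_potential α t)
    (fun a _ b hb hab => by
      rw [← mul_sub, mul_assoc]
      exact mul_le_mul_of_nonneg_left (nhWeight_sub_le hα hm hab hb) (by positivity)) hx hy
  convert this using 2
  ring

noncomputable def drift (α f : ℝ) : ℝ := f + α * f * (65 / 100 - 83 / 100 * Real.log f)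

theorem potential_step_of_nonpos {α R r : ℝ} (hα0 : 0 ≤ α) (hα : α ≤ 1 / 400) (hR : R ≤ 0)
    (hr : |r| ≤ 2) :
    potential α ((1 - α) * R + r) ≤ drift α (potential α R) + α / 4 * nhWeight α R * r := by
  have hy : max ((1 - α) * R + r) 0 ^ 2 ≤ 4 := by
    have : max ((1 - α) * R + r) 0 ≤ 2 := max_le (by nlinarith [abs_le.1 hr]) (by norm_num)
    nlinarith [le_max_right ((1 - α) * R + r) 0]
  have hexp : potential α ((1 - α) * R + r) ≤ 1 / (1 - α / 2) :=
    calc potential α ((1 - α) * R + r) ≤ Real.exp (α / 2) := Real.exp_le_exp.2 (by nlinarith)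
      _ ≤ 1 / (1 - α / 2) := Real.exp_bound_div_one_sub_of_interval (by linarith) (by linarith)
  rw [potential_of_nonpos α hR, nhWeight, if_neg hR.not_gt, drift, Real.log_one]
  refine hexp.trans ?_
  rw [div_le_iff₀ (by linarith)]
  nlinarith

theorem potential_step_of_pos {α R r : ℝ} (hα0 : 0 ≤ α) (hα : α ≤ 1 / 400) (hR : 0 < R)
    (hαR : α * R ≤ 1 / 10) (hr : |r| ≤ 2) :
    potential α ((1 - α) * R + r) ≤ drift α (potential α R) + α / 4 * nhWeight α R * r := by
  obtain ⟨hr₁, hr₂⟩ := abs_le.1 hr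
  set F := Real.exp (α * R ^ 2 / 8) with hF
  have hαR0 : 0 ≤ α * R := mul_nonneg hα0 hR.le
  have htaylor := potential_le_quadratic hα0 (m := R + 2) (x := R) (y := (1 - α) * R + r)
    (by linarith) (by linarith) (by nlinarith)
  rw [show (1 - α) * R + r - R = r - α * R by ring] at htaylor
  have hsq : (r - α * R) ^ 2 ≤ 441 / 100 := by nlinarith
  have hshift : α * (R + 2) ^ 2 / 8 ≤ α * R ^ 2 / 8 + 41 / 800 := by nlinarith
  have hexp : Real.exp (α * (R + 2) ^ 2 / 8) ≤ 800 / 759 * F :=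
    calc Real.exp (α * (R + 2) ^ 2 / 8) ≤ F * Real.exp (41 / 800) := by
          rw [hF, ← Real.exp_add]; exact Real.exp_le_exp.2 hshift
      _ ≤ F * (1 / (1 - 41 / 800)) := by
          gcongr; exact Real.exp_bound_div_one_sub_of_interval (by norm_num) (by norm_num)
      _ = 800 / 759 * F := by ring
  have hcoef : 1 + α * (R + 2) ^ 2 / 4 ≤ 1 + α * R ^ 2 / 4 + 41 / 400 := by linarith
  have hcurv :
      α / 8 * ((1 + α * (R + 2) ^ 2 / 4) * Real.exp (α * (R + 2) ^ 2 / 8)) * (r - α * R) ^ 2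
      ≤ α / 8 * ((1 + α * R ^ 2 / 4 + 41 / 400) * (800 / 759 * F)) * (441 / 100) :=
    mul_le_mul (mul_le_mul_of_nonneg_left
      (mul_le_mul hcoef hexp (Real.exp_pos _).le (by positivity)) (by positivity))
      hsq (sq_nonneg _) (by positivity)
  rw [potential_of_nonneg α hR.le] at htaylor ⊢
  rw [nhWeight, if_pos hR] at htaylor ⊢
  rw [drift, Real.log_exp]
  have hF0 : 0 < F := Real.exp_pos _
  -- The curvature term is at most `α F (0.641 + 0.146 α R²)`, while the linear term gives back
  -- `α² R² F / 4` and the drift allows `α F (0.65 - 0.104 α R²)`.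
  nlinarith [mul_nonneg hα0 hF0.le, mul_nonneg (mul_nonneg hαR0 hαR0) hF0.le]

theorem potential_step {α R r : ℝ} (hα0 : 0 ≤ α) (hα : α ≤ 1 / 400) (hαR : α * R ≤ 1 / 10)
    (hr : |r| ≤ 2) :
    potential α ((1 - α) * R + r) ≤ drift α (potential α R) + α / 4 * nhWeight α R * r := by
  rcases le_or_gt R 0 with hR | hR
  · exact potential_step_of_nonpos hα0 hα hR hr
  · exact potential_step_of_pos hα0 hα hR hαR hr

theorem drift_le_tangent {α f c : ℝ} (hα : 0 ≤ α) (hf : 0 < f) (hc : 0 < c) :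
    drift α f ≤ drift α c + (1 + α * (65 / 100 - 83 / 100 * (Real.log c + 1))) * (f - c) := by
  have hlog : f - c ≤ f * (Real.log f - Real.log c) := by
    have h := Real.one_sub_inv_le_log_of_pos (div_pos hf hc)
    rw [Real.log_div hf.ne' hc.ne', inv_div, sub_le_iff_le_add] at h
    have := mul_le_mul_of_nonneg_left h hf.le
    rw [mul_add, mul_div_cancel₀ _ hf.ne'] at this
    linarith
  unfold drift
  nlinarith [mul_le_mul_of_nonneg_left hlog hα]

theorem sum_drift_le {ι : Type*} [Fintype ι] {α : ℝ} (hα0 : 0 ≤ α) (hα : α ≤ 1 / 2)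
    {f : ι → ℝ} (hf : ∀ i, 0 < f i) (hsum : ∑ i, f i ≤ 2.32 * Fintype.card ι) :
    ∑ i, drift α (f i) ≤ 2.32 * Fintype.card ι := by
  set c : ℝ := 2.32 with hc
  set s := 1 + α * (65 / 100 - 83 / 100 * (Real.log c + 1)) with hs_def
  have hlog_lower : (65 : ℝ) / 83 ≤ Real.log c := by
    simpa using le_log_two_point_three_two_mul one_pos
  have hlog_upper : Real.log c ≤ 33 / 25 := by
    have := Real.log_le_sub_one_of_pos (show 0 < c by norm_num)
    norm_num [hc] at this ⊢
    linarith
  have hdrift : drift α c ≤ c := by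
    unfold drift
    nlinarith
  have hs : 0 ≤ s := by
    rw [hs_def]
    nlinarith [mul_le_mul_of_nonneg_left hlog_upper hα0]
  calc ∑ i, drift α (f i) ≤ ∑ i, (drift α c + s * (f i - c)) :=
        sum_le_sum fun i _ => drift_le_tangent hα0 (hf i) (by norm_num)
    _ = Fintype.card ι * drift α c + s * (∑ i, f i - c * Fintype.card ι) := by
        rw [sum_add_distrib, ← mul_sum, sum_sub_distrib]
        simp only [sum_const, card_univ, nsmul_eq_mul]
        ring
    _ ≤ c * Fintype.card ι := by
        nlinarith [mul_nonneg hs (show 0 ≤ c * Fintype.card ι - ∑ i, f i by linarith)]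
    _ = 2.32 * Fintype.card ι := rfl

variable {N : ℕ} {α : ℝ}

theorem nhProb_nonneg (R : Fin N → ℝ) (i : Fin N) : 0 ≤ nhProb α R i := by
  unfold nhProb
  split_ifs with hW
  · exact div_nonneg (nhWeight_nonneg α _) hW.le
  · positivity

theorem sum_nhProb (hN : 0 < N) (R : Fin N → ℝ) : ∑ i, nhProb α R i = 1 := by
  unfold nhProb
  split_ifs with hW
  · rw [← sum_div, div_self hW.ne']
  · simp [(Nat.cast_pos.2 hN).ne']

theorem abs_sum_nhProb_mul_le_one (hN : 0 < N) (R : Fin N → ℝ) {x : Fin N → ℝ}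
    (hx : ∀ k, |x k| ≤ 1) : |∑ k, nhProb α R k * x k| ≤ 1 :=
  calc |∑ k, nhProb α R k * x k| ≤ ∑ k, nhProb α R k * |x k| := by
        refine (abs_sum_le_sum_abs _ _).trans_eq (sum_congr rfl fun k _ => ?_)
        rw [abs_mul, abs_of_nonneg (nhProb_nonneg R k)]
    _ ≤ ∑ k, nhProb α R k := sum_le_sum fun k _ =>
        mul_le_of_le_one_right (nhProb_nonneg R k) (hx k)
    _ = 1 := sum_nhProb hN R

theorem sum_nhWeight_mul_sub_eq_zero (R x : Fin N → ℝ) :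
    ∑ i, nhWeight α (R i) * (x i - ∑ k, nhProb α R k * x k) = 0 := by
  by_cases hW : 0 < ∑ k, nhWeight α (R k)
  · simp only [nhProb, if_pos hW, div_mul_eq_mul_div, ← sum_div, mul_sub, sum_sub_distrib,
      ← sum_mul, mul_div_cancel₀ _ hW.ne', sub_self]
  · have hzero : ∀ i, nhWeight α (R i) = 0 := fun i =>
      (sum_eq_zero_iff_of_nonneg fun k _ => nhWeight_nonneg α (R k)).1
        (le_antisymm (not_lt.1 hW) (sum_nonneg fun k _ => nhWeight_nonneg α (R k))) i (mem_univ i)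
    simp [hzero]

theorem nhRegret_succ (g : ℕ → Fin N → ℝ) (j : ℕ) (i : Fin N) :
    nhRegret α g (j + 1) i = (1 - α) * nhRegret α g j i
      + (g j i - ∑ k, nhProb α (nhRegret α g j) k * g j k) :=
  add_sub_assoc _ _ _

theorem mul_max_sq_le_of_potential_le {t c : ℝ} (h : potential α t ≤ c) :
    α * max t 0 ^ 2 ≤ 8 * Real.log c := by
  have := Real.log_le_log (potential_pos α t) h
  rw [log_potential] at this
  linarith

theorem mul_le_of_potential_le (hα : 0 ≤ α) {t c : ℝ} (h : potential α t ≤ c)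
    (hc : 800 * α * Real.log c ≤ 1) : α * t ≤ 1 / 10 := by
  have hsq : (α * max t 0) ^ 2 ≤ (1 / 10) ^ 2 := by
    nlinarith [mul_le_mul_of_nonneg_left (mul_max_sq_le_of_potential_le h) hα]
  have := abs_le_of_sq_le_sq' hsq (by norm_num)
  nlinarith [mul_le_mul_of_nonneg_left (le_max_left t 0) hα]

theorem le_sqrt_of_potential_le (hα : 0 < α) {t c : ℝ} (h : potential α t ≤ c) :
    t ≤ Real.sqrt (8 * Real.log c / α) := by
  refine (le_max_left t 0).trans (Real.le_sqrt_of_sq_le ?_)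
  rw [le_div_iff₀ hα, mul_comm]
  exact mul_max_sq_le_of_potential_le h

theorem sum_potential_nhRegret_le (hN : 0 < N) (hα0 : 0 ≤ α)
    (hα : 800 * α * Real.log (2.32 * N) ≤ 1) {g : ℕ → Fin N → ℝ}
    (hg : ∀ j i, g j i ∈ Set.Icc (-1 : ℝ) 1) (j : ℕ) :
    ∑ i, potential α (nhRegret α g j i) ≤ 2.32 * N := by
  have hα400 : α ≤ 1 / 400 := by nlinarith [le_log_two_point_three_two_mul hN]
  induction j with
  | zero =>
    simp only [nhRegret, potential_of_nonpos α le_rfl, sum_const, card_univ, Fintype.card_fin,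
      nsmul_eq_mul, mul_one]
    linarith [(Nat.cast_pos (α := ℝ)).2 hN]
  | succ j ih =>
    set R := nhRegret α g j
    set A := ∑ k, nhProb α R k * g j k
    have hA : |A| ≤ 1 := abs_sum_nhProb_mul_le_one hN R fun k => abs_le.2 (hg j k)
    have hαR : ∀ i, α * R i ≤ 1 / 10 := fun i => mul_le_of_potential_le hα0
      ((single_le_sum (fun k _ => (potential_pos α (R k)).le) (mem_univ i)).trans ih) hα
    have hr : ∀ i, |g j i - A| ≤ 2 := fun i =>
      (abs_sub _ _).trans (by linarith [abs_le.2 (hg j i), hA])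
    calc ∑ i, potential α (nhRegret α g (j + 1) i)
        ≤ ∑ i, (drift α (potential α (R i)) + α / 4 * (nhWeight α (R i) * (g j i - A))) :=
          sum_le_sum fun i _ => by
            rw [nhRegret_succ, ← mul_assoc]
            exact potential_step hα0 hα400 (hαR i) (hr i)
      _ = ∑ i, drift α (potential α (R i)) := by
          rw [sum_add_distrib, ← mul_sum, sum_nhWeight_mul_sub_eq_zero, mul_zero, add_zero]
      _ ≤ 2.32 * N := by
          simpa using sum_drift_le hα0 (by linarith) (fun i => potential_pos α (R i))
            (by simpa using ih)

end NormalHedge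

theorem normalHedge_regret_bound
    (N : ℕ) (hN : 1 ≤ N)
    (α : ℝ) (hα0 : 0 < α) (hα : α < 1 / (800 * Real.log (2.32 * N)))
    (g : ℕ → Fin N → ℝ) (hg : ∀ j i, g j i ∈ Set.Icc (-1 : ℝ) 1)
    (i : Fin N) (j : ℕ) :
    nhRegret α g j i ≤ Real.sqrt (8 * Real.log (2.32 * N) / α) := by
  have hL := le_log_two_point_three_two_mul hN
  have hαL : 800 * α * Real.log (2.32 * N) ≤ 1 := by
    rw [lt_div_iff₀ (by linarith)] at hα
    linarith
  have hsum := NormalHedge.sum_potential_nhRegret_le hN hα0.le hαL hg j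
  exact NormalHedge.le_sqrt_of_potential_le hα0
    ((single_le_sum (fun k _ => (NormalHedge.potential_pos α _).le) (mem_univ i)).trans hsum)
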